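/- Let ε > 0, y ∈ ℝⁿ, and let D : ℝⁿ → (ℝ²)ⁿ be a linear map. For λ ∈ ℝⁿ with λᵢ ≥ 0 let x*(λ) denote the unique minimiser of F_ε(·; y, λ). Then the solution map λ ↦ x*(λ) is continuously differentiable on the open set {λ ∈ ℝⁿ : λᵢ > 0 for all i}, and its differential J satisfies ∇²_x F_ε(x*(λ); y, λ) ∘ J(λ) = −∂_λ ∇_x F_ε(x*(λ); y, λ) (implicit differentiation of the first-order optimality condition ∇_x F_ε(x*(λ); y, λ) = 0). -/

import Mathlib

/-- The Huber-type smoothing of the Euclidean norm on ℝ². -/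
noncomputable def huber (ε : ℝ) (v : EuclideanSpace ℝ (Fin 2)) : ℝ :=
  if ‖v‖ < ε then 3 / (4 * ε) * ‖v‖ ^ 2 - 1 / (8 * ε ^ 3) * ‖v‖ ^ 4
  else ‖v‖ - 3 * ε / 8


/-- The smoothed weighted-TV denoising functional
`F_ε(x; y, λ) = ½‖x − y‖² + Σᵢ λᵢ h_ε((Dx)ᵢ)`, with the weight vector `λ`
regarded as a point of Euclidean space. -/
noncomputable def Feps {n : ℕ} (ε : ℝ) (y : EuclideanSpace ℝ (Fin n))
    (lam : EuclideanSpace ℝ (Fin n))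
    (D : Fin n → (EuclideanSpace ℝ (Fin n) →L[ℝ] EuclideanSpace ℝ (Fin 2)))
    (x : EuclideanSpace ℝ (Fin n)) : ℝ :=
  1 / 2 * ‖x - y‖ ^ 2 + ∑ i, lam i * huber ε (D i x)

open Set Filter Real

noncomputable def phi (ε : ℝ) (s : ℝ) : ℝ :=
  if s < ε ^ 2 then 3 / (4 * ε) * s - 1 / (8 * ε ^ 3) * s ^ 2 else Real.sqrt s - 3 * ε / 8

noncomputable def phi' (ε : ℝ) (s : ℝ) : ℝ :=
  if s < ε ^ 2 then 3 / (4 * ε) - s / (4 * ε ^ 3) else 1 / (2 * Real.sqrt s)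

noncomputable def phi'' (ε : ℝ) (s : ℝ) : ℝ :=
  if s < ε ^ 2 then -(1 / (4 * ε ^ 3)) else -(1 / (4 * (s * Real.sqrt s)))

section oneD
variable {ε : ℝ} (hε : 0 < ε)

lemma poly_hasDerivAt (t : ℝ) :
    HasDerivAt (fun u : ℝ => 3 / (4 * ε) * u - 1 / (8 * ε ^ 3) * u ^ 2)
      (3 / (4 * ε) - t / (4 * ε ^ 3)) t := by
  have h : HasDerivAt (fun u : ℝ => 3 / (4 * ε) * u - 1 / (8 * ε ^ 3) * u ^ 2) _ t :=
    ((hasDerivAt_id t).const_mul (3 / (4 * ε))).sub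
    ((hasDerivAt_pow 2 t).const_mul (1 / (8 * ε ^ 3)))
  convert h using 1
  ring

lemma outer_hasDerivAt {t : ℝ} (ht : t ≠ 0) :
    HasDerivAt (fun u : ℝ => Real.sqrt u - 3 * ε / 8) (1 / (2 * Real.sqrt t)) t :=
  (Real.hasDerivAt_sqrt ht).sub_const _

lemma outer'_hasDerivAt {t : ℝ} (ht : 0 < t) :
    HasDerivAt (fun u : ℝ => 1 / (2 * Real.sqrt u)) (-(1 / (4 * (t * Real.sqrt t)))) t := by
  have hst : Real.sqrt t ≠ 0 := by positivity
  have h2 : HasDerivAt (fun u : ℝ => 2 * Real.sqrt u) (2 * (1 / (2 * Real.sqrt t))) t :=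
    (Real.hasDerivAt_sqrt ht.ne').const_mul 2
  have h3 : HasDerivAt (fun u : ℝ => (2 * Real.sqrt u)⁻¹) _ t := h2.inv (by positivity)
  have heq : (fun u : ℝ => (2 * Real.sqrt u)⁻¹) = fun u : ℝ => 1 / (2 * Real.sqrt u) := by
    funext u; rw [one_div]
  rw [heq] at h3
  convert h3 using 1
  have hsq : Real.sqrt t ^ 2 = t := Real.sq_sqrt ht.le
  field_simp
  nlinarith [hsq, Real.sqrt_nonneg t]

include hε

lemma phi_eqOn_Iic : ∀ t ∈ Iic (ε ^ 2),
    phi ε t = 3 / (4 * ε) * t - 1 / (8 * ε ^ 3) * t ^ 2 := by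
  intro t ht
  rcases lt_or_eq_of_le (mem_Iic.mp ht) with h | h
  · rw [phi, if_pos h]
  · subst h
    rw [phi, if_neg (lt_irrefl _), Real.sqrt_sq hε.le]
    field_simp
    ring

lemma phi_eqOn_Ici : ∀ t ∈ Ici (ε ^ 2), phi ε t = Real.sqrt t - 3 * ε / 8 := by
  intro t ht
  rw [phi, if_neg (not_lt.2 (mem_Ici.mp ht))]

lemma phi_hasDerivAt (s : ℝ) : HasDerivAt (phi ε) (phi' ε s) s := by
  rcases lt_trichotomy s (ε ^ 2) with h | h | h
  · have he : phi ε =ᶠ[nhds s] fun u => 3 / (4 * ε) * u - 1 / (8 * ε ^ 3) * u ^ 2 := by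
      filter_upwards [Iio_mem_nhds h] with t ht
      rw [phi, if_pos (mem_Iio.mp ht)]
    rw [phi', if_pos h]
    exact (poly_hasDerivAt s).congr_of_eventuallyEq he
  · subst h
    have hval : phi' ε (ε ^ 2) = 1 / (2 * ε) := by
      rw [phi', if_neg (lt_irrefl _), Real.sqrt_sq hε.le]
    rw [hval]
    have hIic : HasDerivWithinAt (phi ε) (1 / (2 * ε)) (Iic (ε ^ 2)) (ε ^ 2) := by
      have h1 := (poly_hasDerivAt (ε := ε) (ε ^ 2)).hasDerivWithinAt (s := Iic (ε ^ 2))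
      have h2 : (3 : ℝ) / (4 * ε) - ε ^ 2 / (4 * ε ^ 3) = 1 / (2 * ε) := by
        field_simp; ring
      rw [h2] at h1
      exact h1.congr (phi_eqOn_Iic hε) (phi_eqOn_Iic hε _ self_mem_Iic)
    have hIci : HasDerivWithinAt (phi ε) (1 / (2 * ε)) (Ici (ε ^ 2)) (ε ^ 2) := by
      have h1 := (outer_hasDerivAt (ε := ε) (t := ε ^ 2) (by positivity)).hasDerivWithinAt
        (s := Ici (ε ^ 2))
      rw [Real.sqrt_sq hε.le] at h1
      exact h1.congr (phi_eqOn_Ici hε) (phi_eqOn_Ici hε _ self_mem_Ici)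
    have hu := hIic.union hIci
    rwa [Iic_union_Ici, hasDerivWithinAt_univ] at hu
  · have hpos : (0 : ℝ) < s := lt_trans (by positivity) h
    have he : phi ε =ᶠ[nhds s] fun u => Real.sqrt u - 3 * ε / 8 := by
      filter_upwards [Ioi_mem_nhds h] with t ht
      rw [phi, if_neg (not_lt.2 (mem_Ioi.mp ht).le)]
    rw [phi', if_neg (not_lt.2 h.le)]
    exact (outer_hasDerivAt hpos.ne').congr_of_eventuallyEq he

lemma phi'_eqOn_Iic : ∀ t ∈ Iic (ε ^ 2), phi' ε t = 3 / (4 * ε) - t / (4 * ε ^ 3) := by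
  intro t ht
  rcases lt_or_eq_of_le (mem_Iic.mp ht) with h | h
  · rw [phi', if_pos h]
  · subst h
    rw [phi', if_neg (lt_irrefl _), Real.sqrt_sq hε.le]
    field_simp
    ring

lemma phi'_eqOn_Ici : ∀ t ∈ Ici (ε ^ 2), phi' ε t = 1 / (2 * Real.sqrt t) := by
  intro t ht
  rw [phi', if_neg (not_lt.2 (mem_Ici.mp ht))]

lemma inner_poly_hasDerivAt (t : ℝ) :
    HasDerivAt (fun u : ℝ => 3 / (4 * ε) - u / (4 * ε ^ 3)) (-(1 / (4 * ε ^ 3))) t := by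
  have h := ((hasDerivAt_id t).div_const (4 * ε ^ 3)).const_sub (3 / (4 * ε))
  simpa using h

lemma phi'_hasDerivAt (s : ℝ) : HasDerivAt (phi' ε) (phi'' ε s) s := by
  rcases lt_trichotomy s (ε ^ 2) with h | h | h
  · have he : phi' ε =ᶠ[nhds s] fun u => 3 / (4 * ε) - u / (4 * ε ^ 3) := by
      filter_upwards [Iio_mem_nhds h] with t ht
      rw [phi', if_pos (mem_Iio.mp ht)]
    rw [phi'', if_pos h]
    exact (inner_poly_hasDerivAt hε s).congr_of_eventuallyEq he
  · subst h
    have hval : phi'' ε (ε ^ 2) = -(1 / (4 * ε ^ 3)) := by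
      rw [phi'', if_neg (lt_irrefl _), Real.sqrt_sq hε.le]
      ring_nf
    rw [hval]
    have hIic : HasDerivWithinAt (phi' ε) (-(1 / (4 * ε ^ 3))) (Iic (ε ^ 2)) (ε ^ 2) :=
      (inner_poly_hasDerivAt hε (ε ^ 2)).hasDerivWithinAt.congr
        (phi'_eqOn_Iic hε) (phi'_eqOn_Iic hε _ self_mem_Iic)
    have hIci : HasDerivWithinAt (phi' ε) (-(1 / (4 * ε ^ 3))) (Ici (ε ^ 2)) (ε ^ 2) := by
      have h1 := (outer'_hasDerivAt (t := ε ^ 2) (by positivity)).hasDerivWithinAt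
        (s := Ici (ε ^ 2))
      rw [Real.sqrt_sq hε.le] at h1
      have h2 : -(1 / (4 * (ε ^ 2 * ε))) = -(1 / (4 * ε ^ 3)) := by ring_nf
      rw [h2] at h1
      exact h1.congr (phi'_eqOn_Ici hε) (phi'_eqOn_Ici hε _ self_mem_Ici)
    have hu := hIic.union hIci
    rwa [Iic_union_Ici, hasDerivWithinAt_univ] at hu
  · have hpos : (0 : ℝ) < s := lt_trans (by positivity) h
    have he : phi' ε =ᶠ[nhds s] fun u => 1 / (2 * Real.sqrt u) := by
      filter_upwards [Ioi_mem_nhds h] with t ht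
      rw [phi', if_neg (not_lt.2 (mem_Ioi.mp ht).le)]
    rw [phi'', if_neg (not_lt.2 h.le)]
    exact (outer'_hasDerivAt hpos).congr_of_eventuallyEq he

lemma phi''_eqOn_Ici : ∀ t ∈ Ici (ε ^ 2), phi'' ε t = -(1 / (4 * (t * Real.sqrt t))) := by
  intro t ht
  rw [phi'', if_neg (not_lt.2 (mem_Ici.mp ht))]

lemma phi''_continuous : Continuous (phi'' ε) := by
  rw [continuous_iff_continuousAt]
  intro s
  rcases lt_trichotomy s (ε ^ 2) with h | h | h
  · have he : phi'' ε =ᶠ[nhds s] fun _ => -(1 / (4 * ε ^ 3)) := by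
      filter_upwards [Iio_mem_nhds h] with t ht
      rw [phi'', if_pos (mem_Iio.mp ht)]
    exact ContinuousAt.congr continuousAt_const he.symm
  · subst h
    have hcIic : ContinuousWithinAt (phi'' ε) (Iic (ε ^ 2)) (ε ^ 2) := by
      apply ContinuousWithinAt.congr (continuousWithinAt_const (b := -(1 / (4 * ε ^ 3))))
      · intro t ht
        rcases lt_or_eq_of_le (mem_Iic.mp ht) with h | h
        · rw [phi'', if_pos h]
        · subst h
          rw [phi'', if_neg (lt_irrefl _), Real.sqrt_sq hε.le]
          ring_nf
      · rw [phi'', if_neg (lt_irrefl _), Real.sqrt_sq hε.le]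
        ring_nf
    have hcIci : ContinuousWithinAt (phi'' ε) (Ici (ε ^ 2)) (ε ^ 2) := by
      have hd : ContinuousAt (fun u : ℝ => 4 * (u * Real.sqrt u)) (ε ^ 2) := by fun_prop
      have hne : (4 : ℝ) * (ε ^ 2 * Real.sqrt (ε ^ 2)) ≠ 0 := by
        rw [Real.sqrt_sq hε.le]; positivity
      have hc : ContinuousAt (fun u : ℝ => -(1 / (4 * (u * Real.sqrt u)))) (ε ^ 2) :=
        (continuousAt_const.div hd hne).neg
      exact hc.continuousWithinAt.congr (phi''_eqOn_Ici hε) (phi''_eqOn_Ici hε _ self_mem_Ici)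
    have hu := hcIic.union hcIci
    rw [Iic_union_Ici] at hu
    rwa [← continuousWithinAt_univ]
  · have hpos : (0 : ℝ) < s := lt_trans (by positivity) h
    have he : phi'' ε =ᶠ[nhds s] fun u => -(1 / (4 * (u * Real.sqrt u))) := by
      filter_upwards [Ioi_mem_nhds h] with t ht
      rw [phi'', if_neg (not_lt.2 (mem_Ioi.mp ht).le)]
    have hd : ContinuousAt (fun u : ℝ => 4 * (u * Real.sqrt u)) s := by fun_prop
    have hne : (4 : ℝ) * (s * Real.sqrt s) ≠ 0 := by positivity
    exact ContinuousAt.congr ((continuousAt_const.div hd hne)).neg he.symm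

lemma phi_contDiff : ContDiff ℝ 2 (phi ε) := by
  have h2 : (2 : WithTop ℕ∞) = 1 + 1 := by norm_num
  rw [h2, contDiff_succ_iff_deriv]
  have hd : deriv (phi ε) = phi' ε := funext fun s => (phi_hasDerivAt hε s).deriv
  refine ⟨fun s => (phi_hasDerivAt hε s).differentiableAt, by simp, ?_⟩
  rw [hd, contDiff_one_iff_deriv]
  have hd' : deriv (phi' ε) = phi'' ε := funext fun s => (phi'_hasDerivAt hε s).deriv
  exact ⟨fun s => (phi'_hasDerivAt hε s).differentiableAt, hd' ▸ phi''_continuous hε⟩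

end oneD
noncomputable def psi (ε : ℝ) (r : ℝ) : ℝ :=
  if r < ε then 3 / (4 * ε) * r ^ 2 - 1 / (8 * ε ^ 3) * r ^ 4
  else r - 3 * ε / 8

section huberSec
variable {ε : ℝ} (hε : 0 < ε)

lemma huber_eq_psi_norm : huber ε = fun v => psi ε ‖v‖ := rfl

include hε

lemma psi_eq_phi_sq {r : ℝ} (hr : 0 ≤ r) : psi ε r = phi ε (r ^ 2) := by
  have hiff : r < ε ↔ r ^ 2 < ε ^ 2 := (pow_lt_pow_iff_left₀ hr hε.le (by norm_num)).symm
  by_cases h : r < ε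
  · rw [psi, if_pos h, phi, if_pos (hiff.mp h)]
    ring
  · rw [psi, if_neg h, phi, if_neg (fun hc => h (hiff.mpr hc)), Real.sqrt_sq hr]

lemma huber_eq_phi : huber ε = fun v => phi ε (‖v‖ ^ 2) := by
  funext v
  rw [huber_eq_psi_norm]
  exact psi_eq_phi_sq hε (norm_nonneg v)

lemma huber_contDiff : ContDiff ℝ 2 (huber ε) := by
  rw [huber_eq_phi hε]
  exact (phi_contDiff hε).comp (contDiff_norm_sq ℝ)

lemma psi_hasDerivAt {r : ℝ} (hr : 0 < r) :
    HasDerivAt (psi ε) (phi' ε (r ^ 2) * (2 * r)) r := by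
  have hsq : HasDerivAt (fun u : ℝ => u ^ 2) (2 * r) r := by
    simpa using hasDerivAt_pow 2 r
  have hcomp := (phi_hasDerivAt hε (r ^ 2)).comp r hsq
  have he : psi ε =ᶠ[nhds r] fun u => phi ε (u ^ 2) := by
    filter_upwards [Ioi_mem_nhds hr] with t ht
    exact psi_eq_phi_sq hε (le_of_lt (mem_Ioi.mp ht))
  exact hcomp.congr_of_eventuallyEq he

lemma psi_deriv {r : ℝ} (hr : 0 < r) : deriv (psi ε) r = phi' ε (r ^ 2) * (2 * r) :=
  (psi_hasDerivAt hε hr).deriv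

lemma phi'_nonneg (s : ℝ) : 0 ≤ phi' ε s := by
  rw [phi']
  split_ifs with h
  · have : s / (4 * ε ^ 3) ≤ 3 / (4 * ε) := by
      rw [div_le_div_iff₀ (by positivity) (by positivity)]
      nlinarith [sq_nonneg ε]
    linarith
  · positivity

lemma psi_deriv_val {r : ℝ} (hr : 0 < r) :
    deriv (psi ε) r = if r < ε then (3 * ε ^ 2 * r - r ^ 3) / (2 * ε ^ 3) else 1 := by
  rw [psi_deriv hε hr, phi']
  have hiff : r < ε ↔ r ^ 2 < ε ^ 2 := (pow_lt_pow_iff_left₀ hr.le hε.le (by norm_num)).symm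
  by_cases h : r < ε
  · rw [if_pos (hiff.mp h), if_pos h]
    field_simp
    ring
  · rw [if_neg (fun hc => h (hiff.mpr hc)), if_neg h, Real.sqrt_sq hr.le]
    field_simp

lemma psi_monotoneOn : MonotoneOn (psi ε) (Ici 0) := by
  apply monotoneOn_of_deriv_nonneg (convex_Ici 0)
  · have : ContinuousOn (fun r : ℝ => phi ε (r ^ 2)) (Ici 0) :=
      ((phi_contDiff hε).continuous.comp (continuous_pow 2)).continuousOn
    exact this.congr fun r hr => psi_eq_phi_sq hε (mem_Ici.mp hr)
  · rw [interior_Ici]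
    exact fun r hr => (psi_hasDerivAt hε (mem_Ioi.mp hr)).differentiableAt.differentiableWithinAt
  · rw [interior_Ici]
    intro r hr
    rw [psi_deriv hε (mem_Ioi.mp hr)]
    have := phi'_nonneg hε (r ^ 2)
    have h2r : (0 : ℝ) ≤ 2 * r := by have := (mem_Ioi.mp hr); linarith
    positivity

lemma psi_convexOn : ConvexOn ℝ (Ici 0) (psi ε) := by
  apply MonotoneOn.convexOn_of_deriv (convex_Ici 0)
  · have : ContinuousOn (fun r : ℝ => phi ε (r ^ 2)) (Ici 0) :=
      ((phi_contDiff hε).continuous.comp (continuous_pow 2)).continuousOn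
    exact this.congr fun r hr => psi_eq_phi_sq hε (mem_Ici.mp hr)
  · rw [interior_Ici]
    exact fun r hr => (psi_hasDerivAt hε (mem_Ioi.mp hr)).differentiableAt.differentiableWithinAt
  · rw [interior_Ici]
    intro a ha b hb hab
    have ha' : (0 : ℝ) < a := mem_Ioi.mp ha
    have hb' : (0 : ℝ) < b := mem_Ioi.mp hb
    rw [psi_deriv_val hε ha', psi_deriv_val hε hb']
    by_cases hbe : b < ε
    · have hae : a < ε := lt_of_le_of_lt hab hbe
      rw [if_pos hae, if_pos hbe]
      rw [div_le_div_iff₀ (by positivity) (by positivity)]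
      have h3 : a ^ 2 + a * b + b ^ 2 ≤ 3 * ε ^ 2 := by nlinarith [mul_pos ha' hb']
      have key : 0 ≤ (b - a) * (3 * ε ^ 2 - (a ^ 2 + a * b + b ^ 2)) :=
        mul_nonneg (sub_nonneg.2 hab) (sub_nonneg.2 h3)
      nlinarith [key, pow_pos hε 3]
    · rw [if_neg hbe]
      by_cases hae : a < ε
      · rw [if_pos hae]
        rw [div_le_one (by positivity)]
        nlinarith [mul_nonneg (sq_nonneg (ε - a)) (by positivity : (0:ℝ) ≤ a + 2 * ε)]
      · rw [if_neg hae]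

lemma norm_range_eq : Set.range (fun v : EuclideanSpace ℝ (Fin 2) => ‖v‖) = Ici 0 := by
  ext r
  constructor
  · rintro ⟨v, rfl⟩
    exact mem_Ici.mpr (norm_nonneg v)
  · intro hr
    refine ⟨EuclideanSpace.single 0 r, ?_⟩
    show ‖(EuclideanSpace.single (0 : Fin 2) r : EuclideanSpace ℝ (Fin 2))‖ = r
    rw [EuclideanSpace.norm_single]
    exact abs_of_nonneg (mem_Ici.mp hr)

lemma huber_convexOn : ConvexOn ℝ Set.univ (huber ε) := by
  have himg : (fun v : EuclideanSpace ℝ (Fin 2) => ‖v‖) '' Set.univ = Ici 0 := by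
    rw [Set.image_univ, norm_range_eq hε]
  have h1 : ConvexOn ℝ ((fun v : EuclideanSpace ℝ (Fin 2) => ‖v‖) '' Set.univ) (psi ε) := by
    rw [himg]; exact psi_convexOn hε
  have h2 : MonotoneOn (psi ε) ((fun v : EuclideanSpace ℝ (Fin 2) => ‖v‖) '' Set.univ) := by
    rw [himg]; exact psi_monotoneOn hε
  have hcomp := ConvexOn.comp h1 convexOn_univ_norm h2
  rw [huber_eq_psi_norm]
  exact hcomp

end huberSec
section bigSpace

variable {n : ℕ} {ε : ℝ} {y : EuclideanSpace ℝ (Fin n)}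
  {D : Fin n → (EuclideanSpace ℝ (Fin n) →L[ℝ] EuclideanSpace ℝ (Fin 2))}

lemma Fj_contDiff (hε : 0 < ε) :
    ContDiff ℝ 2 (fun p : EuclideanSpace ℝ (Fin n) × EuclideanSpace ℝ (Fin n) =>
      Feps ε y p.1 D p.2) := by
  unfold Feps
  apply ContDiff.add
  · exact contDiff_const.mul ((contDiff_snd.sub contDiff_const).norm_sq ℝ)
  · apply ContDiff.sum
    intro i _
    exact ((EuclideanSpace.proj i).contDiff.comp contDiff_fst).mul
      ((huber_contDiff hε).comp ((D i).contDiff.comp contDiff_snd))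

lemma F_contDiff (hε : 0 < ε) (lam : EuclideanSpace ℝ (Fin n)) :
    ContDiff ℝ 2 (Feps ε y lam D) := by
  have h := (Fj_contDiff (y := y) (D := D) hε).comp
    ((contDiff_const (c := lam)).prodMk contDiff_id)
  exact h

lemma G_contDiff (hε : 0 < ε) :
    ContDiff ℝ 1 (fun p : EuclideanSpace ℝ (Fin n) × EuclideanSpace ℝ (Fin n) =>
      (InnerProductSpace.toDual ℝ (EuclideanSpace ℝ (Fin n))).symm
        (fderiv ℝ (Feps ε y p.1 D) p.2)) := by
  have hunc : ContDiff ℝ 2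
      (Function.uncurry (fun (p : EuclideanSpace ℝ (Fin n) × EuclideanSpace ℝ (Fin n))
        (x : EuclideanSpace ℝ (Fin n)) => Feps ε y p.1 D x)) := by
    have h := (Fj_contDiff (y := y) (D := D) hε).comp
      (((contDiff_fst.fst).prodMk contDiff_snd) :
        ContDiff ℝ 2 (fun q : (EuclideanSpace ℝ (Fin n) × EuclideanSpace ℝ (Fin n)) ×
          EuclideanSpace ℝ (Fin n) => (q.1.1, q.2)))
    exact h
  have h1 : ContDiff ℝ 1 (fun p : EuclideanSpace ℝ (Fin n) × EuclideanSpace ℝ (Fin n) =>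
      fderiv ℝ (Feps ε y p.1 D) p.2) :=
    ContDiff.fderiv (f := fun (p : EuclideanSpace ℝ (Fin n) × EuclideanSpace ℝ (Fin n))
      (x : EuclideanSpace ℝ (Fin n)) => Feps ε y p.1 D x)
      (g := Prod.snd) hunc contDiff_snd (by norm_num)
  exact (LinearIsometryEquiv.contDiff
    (((InnerProductSpace.toDual ℝ (EuclideanSpace ℝ (Fin n))).symm :
      StrongDual ℝ (EuclideanSpace ℝ (Fin n)) ≃ₗᵢ[ℝ] EuclideanSpace ℝ (Fin n))))
    |>.comp h1

lemma gradF_contDiff (hε : 0 < ε) (lam : EuclideanSpace ℝ (Fin n)) :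
    ContDiff ℝ 1 (gradient (Feps ε y lam D)) := by
  have h := (G_contDiff (y := y) (D := D) hε).comp
    ((contDiff_const (c := lam)).prodMk contDiff_id)
  exact h

lemma grad_eq_zero_of_min {lam x₀ : EuclideanSpace ℝ (Fin n)}
    (hm : ∀ x, Feps ε y lam D x₀ ≤ Feps ε y lam D x) :
    gradient (Feps ε y lam D) x₀ = 0 := by
  have hloc : IsLocalMin (Feps ε y lam D) x₀ := Filter.Eventually.of_forall hm
  have hfd : fderiv ℝ (Feps ε y lam D) x₀ = 0 := hloc.fderiv_eq_zero
  show (InnerProductSpace.toDual ℝ (EuclideanSpace ℝ (Fin n))).symm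
      (fderiv ℝ (Feps ε y lam D) x₀) = 0
  rw [hfd]
  exact map_zero _

lemma gpart_convexOn (hε : 0 < ε) (lam : EuclideanSpace ℝ (Fin n)) (hl : ∀ i, 0 ≤ lam i) :
    ConvexOn ℝ Set.univ (fun x : EuclideanSpace ℝ (Fin n) =>
      ∑ i, lam i * huber ε (D i x)) := by
  have key : ∀ s : Finset (Fin n),
      ConvexOn ℝ Set.univ (fun x : EuclideanSpace ℝ (Fin n) =>
        ∑ i ∈ s, lam i * huber ε (D i x)) := by
    intro s
    induction s using Finset.induction with
    | empty => simpa using convexOn_const (0 : ℝ) convex_univ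
    | @insert j s hj ih =>
      have hterm : ConvexOn ℝ Set.univ
          (fun x : EuclideanSpace ℝ (Fin n) => lam j * huber ε (D j x)) := by
        have hcomp := (huber_convexOn hε).comp_affineMap (D j).toLinearMap.toAffineMap
        rw [Set.preimage_univ] at hcomp
        have h2 := hcomp.smul (hl j)
        simpa [Function.comp, smul_eq_mul] using h2
      have hadd := hterm.add ih
      have heq : (fun x : EuclideanSpace ℝ (Fin n) =>
          ∑ i ∈ insert j s, lam i * huber ε (D i x)) =
          (fun x : EuclideanSpace ℝ (Fin n) => lam j * huber ε (D j x)) +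
            fun x : EuclideanSpace ℝ (Fin n) => ∑ i ∈ s, lam i * huber ε (D i x) := by
        funext x
        simp [Finset.sum_insert hj]
      rw [heq]
      exact hadd
  exact key Finset.univ

lemma fderiv_eq_inner_grad (lam z u : EuclideanSpace ℝ (Fin n)) :
    fderiv ℝ (Feps ε y lam D) z u = (inner ℝ (gradient (Feps ε y lam D) z) u : ℝ) :=
  (InnerProductSpace.toDual_symm_apply).symm

lemma grad_strong_mono (hε : 0 < ε) (lam : EuclideanSpace ℝ (Fin n)) (hl : ∀ i, 0 ≤ lam i)
    (a b : EuclideanSpace ℝ (Fin n)) :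
    ‖a - b‖ ^ 2 ≤
      (inner ℝ (gradient (Feps ε y lam D) a - gradient (Feps ε y lam D) b) (a - b) : ℝ) := by
  set F := Feps ε y lam D with hF
  set u : EuclideanSpace ℝ (Fin n) := a - b with hu
  set w : EuclideanSpace ℝ (Fin n) := b - y with hw
  have hF2 := F_contDiff (y := y) (D := D) hε lam
  have hline : ∀ t : ℝ, HasDerivAt (fun t : ℝ => b + t • u) u t := by
    intro t
    have h := ((hasDerivAt_id t).smul_const u).const_add b
    simpa using h
  have hq : ∀ t : ℝ, HasDerivAt (fun t : ℝ => F (b + t • u)) (fderiv ℝ F (b + t • u) u) t :=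
    fun t => ((hF2.differentiable (by norm_num)) _).hasFDerivAt.comp_hasDerivAt t (hline t)
  set c1 : ℝ := inner ℝ w u with hc1
  set c2 : ℝ := ‖u‖ ^ 2 with hc2
  have hquad : ∀ t : ℝ, HasDerivAt
      (fun t : ℝ => 1 / 2 * ‖w‖ ^ 2 + c1 * t + c2 / 2 * t ^ 2) (c1 + c2 * t) t := by
    intro t
    have h : HasDerivAt (fun t : ℝ => 1 / 2 * ‖w‖ ^ 2 + c1 * t + c2 / 2 * t ^ 2) _ t :=
      (((hasDerivAt_id t).const_mul c1).const_add (1 / 2 * ‖w‖ ^ 2)).add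
      ((hasDerivAt_pow 2 t).const_mul (c2 / 2))
    convert h using 1
    push_cast
    ring
  have hnorm : ∀ t : ℝ, 1 / 2 * ‖w + t • u‖ ^ 2 =
      1 / 2 * ‖w‖ ^ 2 + c1 * t + c2 / 2 * t ^ 2 := by
    intro t
    rw [norm_add_sq_real, real_inner_smul_right, norm_smul]
    simp only [Real.norm_eq_abs, mul_pow, sq_abs]
    rw [hc1, hc2]
    ring
  set qg : ℝ → ℝ := fun t => F (b + t • u) - (1 / 2 * ‖w‖ ^ 2 + c1 * t + c2 / 2 * t ^ 2)
    with hqg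
  have hqg_eq : qg = fun t : ℝ => ∑ i, lam i * huber ε (D i (b + t • u)) := by
    funext t
    rw [hqg]
    simp only
    rw [hF]
    show Feps ε y lam D (b + t • u) - _ = _
    rw [Feps, ← hnorm t]
    have hbw : b + t • u - y = w + t • u := by rw [hw]; abel
    rw [hbw]
    ring
  have hqg_conv : ConvexOn ℝ Set.univ qg := by
    have hgc := gpart_convexOn (D := D) hε lam hl
    have haff := hgc.comp_affineMap (AffineMap.lineMap b (b + u))
    rw [Set.preimage_univ] at haff
    have heq : (fun x : EuclideanSpace ℝ (Fin n) => ∑ i, lam i * huber ε (D i x)) ∘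
        (AffineMap.lineMap b (b + u)) =
        fun t : ℝ => ∑ i, lam i * huber ε (D i (b + t • u)) := by
      funext t
      have harg : (AffineMap.lineMap b (b + u)) t = b + t • u := by
        simp only [AffineMap.lineMap_apply, vsub_eq_sub, vadd_eq_add]
        module
      simp only [Function.comp_apply, harg]
    rw [heq] at haff
    rw [hqg_eq]
    exact haff
  have hqg_deriv : ∀ t : ℝ, HasDerivAt qg (fderiv ℝ F (b + t • u) u - (c1 + c2 * t)) t :=
    fun t => (hq t).sub (hquad t)
  have hmono := hqg_conv.monotoneOn_deriv
    (fun t _ => (hqg_deriv t).differentiableAt) (Set.mem_univ 0) (Set.mem_univ 1) zero_le_one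
  rw [(hqg_deriv 0).deriv, (hqg_deriv 1).deriv] at hmono
  have hb1 : b + (1 : ℝ) • u = a := by rw [hu]; module
  have hb0 : b + (0 : ℝ) • u = b := by module
  rw [hb1, hb0] at hmono
  have hfa : fderiv ℝ F a u = (inner ℝ (gradient F a) u : ℝ) :=
    fderiv_eq_inner_grad lam a u
  have hfb : fderiv ℝ F b u = (inner ℝ (gradient F b) u : ℝ) :=
    fderiv_eq_inner_grad lam b u
  rw [hfa, hfb] at hmono
  simp only [mul_zero, mul_one] at hmono
  rw [inner_sub_left]
  linarith

lemma grad_unique (hε : 0 < ε) (lam : EuclideanSpace ℝ (Fin n)) (hl : ∀ i, 0 ≤ lam i)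
    {a b : EuclideanSpace ℝ (Fin n)}
    (ha : gradient (Feps ε y lam D) a = 0) (hb : gradient (Feps ε y lam D) b = 0) :
    a = b := by
  have h := grad_strong_mono (y := y) (D := D) hε lam hl a b
  rw [ha, hb] at h
  simp only [sub_zero, inner_zero_left] at h
  have hz : ‖a - b‖ = 0 := by nlinarith [norm_nonneg (a - b), sq_nonneg ‖a - b‖]
  rw [norm_eq_zero, sub_eq_zero] at hz
  exact hz

lemma hess_bound (hε : 0 < ε) (lam : EuclideanSpace ℝ (Fin n)) (hl : ∀ i, 0 ≤ lam i)
    (x₀ u : EuclideanSpace ℝ (Fin n)) :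
    ‖u‖ ^ 2 ≤ (inner ℝ u (fderiv ℝ (gradient (Feps ε y lam D)) x₀ u) : ℝ) := by
  set F := Feps ε y lam D with hF
  set gF := gradient F with hgF
  have hcd := gradF_contDiff (y := y) (D := D) hε lam
  have hfd : HasFDerivAt gF (fderiv ℝ gF x₀) x₀ := (hcd.differentiable one_ne_zero x₀).hasFDerivAt
  have hline : ∀ t : ℝ, HasDerivAt (fun t : ℝ => x₀ + t • u) u t := by
    intro t
    have h := ((hasDerivAt_id t).smul_const u).const_add x₀
    simpa using h
  have h0 : x₀ + (0 : ℝ) • u = x₀ := by module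
  have hfd0 : HasFDerivAt gF (fderiv ℝ gF x₀) (x₀ + (0 : ℝ) • u) := by
    rw [h0]; exact hfd
  have hcomp : HasDerivAt (fun t : ℝ => gF (x₀ + t • u)) (fderiv ℝ gF x₀ u) 0 :=
    by have := hfd0.comp_hasDerivAt 0 (hline 0); exact this
  set c : ℝ → ℝ := fun t : ℝ => (inner ℝ u (gF (x₀ + t • u) - gF x₀) : ℝ) with hc
  have hcder : HasDerivAt c (inner ℝ u (fderiv ℝ gF x₀ u) : ℝ) 0 := by
    have hsub : HasDerivAt (fun t : ℝ => gF (x₀ + t • u) - gF x₀) (fderiv ℝ gF x₀ u) 0 :=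
      hcomp.sub_const _
    have h := ((innerSL ℝ u).hasFDerivAt).comp_hasDerivAt 0 hsub
    simpa [Function.comp_def] using h
  have hc0 : c 0 = 0 := by simp [hc, h0]
  have hslope : ∀ t ∈ Set.Ioi (0 : ℝ), ‖u‖ ^ 2 ≤ c t / t := by
    intro t ht
    have htpos : (0 : ℝ) < t := ht
    have hm := grad_strong_mono (y := y) (D := D) hε lam hl (x₀ + t • u) x₀
    have hdiff : x₀ + t • u - x₀ = t • u := by module
    rw [hdiff, norm_smul] at hm
    simp only [Real.norm_eq_abs] at hm
    rw [real_inner_smul_right] at hm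
    have hinner : (inner ℝ (gF (x₀ + t • u) - gF x₀) u : ℝ) = c t := by
      rw [hc]
      exact real_inner_comm _ _
    rw [hinner, abs_of_pos htpos] at hm
    rw [le_div_iff₀ htpos]
    have h2 : t * (‖u‖ ^ 2 * t) ≤ t * c t := by
      calc t * (‖u‖ ^ 2 * t) = (t * ‖u‖) ^ 2 := by ring
      _ ≤ t * c t := hm
    exact le_of_mul_le_mul_left h2 htpos
  have htend : Filter.Tendsto (slope c 0) (nhdsWithin 0 (Set.Ioi 0))
      (nhds ((inner ℝ u (fderiv ℝ gF x₀ u) : ℝ))) := by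
    have h1 := hasDerivAt_iff_tendsto_slope.mp hcder
    exact h1.mono_left (nhdsWithin_mono 0 (fun x hx => ne_of_gt hx))
  refine ge_of_tendsto htend ?_
  filter_upwards [self_mem_nhdsWithin] with t ht
  rw [slope_def_field]
  have h3 := hslope t ht
  rw [hc0]
  simpa [sub_zero] using h3

end bigSpace
set_option maxHeartbeats 1000000 in
/-- The solution map `λ ↦ x*(λ)` of the lower-level problem is `C¹` on the open
positive orthant, and its differential `J` satisfies the implicit-differentiation
identity `∇²ₓF_ε(x*(λ); y, λ) ∘ J(λ) = − ∂_λ ∇ₓF_ε(x*(λ); y, λ)`. -/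
theorem stmt_11 {n : ℕ} (ε : ℝ) (hε : 0 < ε) (y : EuclideanSpace ℝ (Fin n))
    (D : Fin n → (EuclideanSpace ℝ (Fin n) →L[ℝ] EuclideanSpace ℝ (Fin 2)))
    (xstar : EuclideanSpace ℝ (Fin n) → EuclideanSpace ℝ (Fin n))
    (hmin : ∀ lam : EuclideanSpace ℝ (Fin n), (∀ i, 0 ≤ lam i) →
      ∀ x, Feps ε y lam D (xstar lam) ≤ Feps ε y lam D x) :
    ContDiffOn ℝ 1 xstar {lam : EuclideanSpace ℝ (Fin n) | ∀ i, 0 < lam i} ∧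
    ∀ lam : EuclideanSpace ℝ (Fin n), (∀ i, 0 < lam i) →
      (fderiv ℝ (gradient (Feps ε y lam D)) (xstar lam)).comp (fderiv ℝ xstar lam) =
        - fderiv ℝ (fun m : EuclideanSpace ℝ (Fin n) =>
            gradient (Feps ε y m D) (xstar lam)) lam := by
  classical
  set G : EuclideanSpace ℝ (Fin n) × EuclideanSpace ℝ (Fin n) → EuclideanSpace ℝ (Fin n) :=
    fun p => (InnerProductSpace.toDual ℝ (EuclideanSpace ℝ (Fin n))).symm
      (fderiv ℝ (Feps ε y p.1 D) p.2) with hGdef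
  have hG : ContDiff ℝ 1 G := G_contDiff hε
  have hΩopen : IsOpen {lam : EuclideanSpace ℝ (Fin n) | ∀ i, 0 < lam i} := by
    have hset : {lam : EuclideanSpace ℝ (Fin n) | ∀ i, 0 < lam i} =
        ⋂ i, (EuclideanSpace.proj (𝕜 := ℝ) i) ⁻¹' Set.Ioi 0 := by
      ext lam
      simp [Set.mem_iInter]
    rw [hset]
    exact isOpen_iInter_of_finite fun i =>
      isOpen_Ioi.preimage (EuclideanSpace.proj (𝕜 := ℝ) i).continuous
  -- main smoothness claim
  have hCD : ∀ lam₀ : EuclideanSpace ℝ (Fin n), (∀ i, 0 < lam₀ i) →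
      ContDiffAt ℝ 1 xstar lam₀ := by
    intro lam₀ hpos
    have hpos' : ∀ i, 0 ≤ lam₀ i := fun i => (hpos i).le
    set p₀ : EuclideanSpace ℝ (Fin n) × EuclideanSpace ℝ (Fin n) := (lam₀, xstar lam₀)
      with hp₀
    set Φ : EuclideanSpace ℝ (Fin n) × EuclideanSpace ℝ (Fin n) →
        EuclideanSpace ℝ (Fin n) × EuclideanSpace ℝ (Fin n) := fun p => (p.1, G p) with hΦdef
    have hΦcd : ContDiff ℝ 1 Φ := contDiff_fst.prodMk hG
    set DG := fderiv ℝ G p₀ with hDGdef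
    have hDG : HasFDerivAt G DG p₀ := (hG.differentiable one_ne_zero p₀).hasFDerivAt
    set A : (EuclideanSpace ℝ (Fin n) × EuclideanSpace ℝ (Fin n)) →L[ℝ]
        (EuclideanSpace ℝ (Fin n) × EuclideanSpace ℝ (Fin n)) :=
      (ContinuousLinearMap.fst ℝ _ _).prod DG with hAdef
    have hA : HasFDerivAt Φ A p₀ := hasFDerivAt_fst.prodMk hDG
    set ι₂ : EuclideanSpace ℝ (Fin n) →L[ℝ]
        EuclideanSpace ℝ (Fin n) × EuclideanSpace ℝ (Fin n) :=
      (0 : EuclideanSpace ℝ (Fin n) →L[ℝ] EuclideanSpace ℝ (Fin n)).prod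
        (ContinuousLinearMap.id ℝ _) with hι₂def
    have hHx : HasFDerivAt (gradient (Feps ε y lam₀ D)) (DG.comp ι₂) (xstar lam₀) :=
      hDG.comp (xstar lam₀) ((hasFDerivAt_const lam₀ _).prodMk (hasFDerivAt_id _))
    -- injectivity of A
    have hker : ∀ z : EuclideanSpace ℝ (Fin n) × EuclideanSpace ℝ (Fin n),
        A z = 0 → z = 0 := by
      intro z hz
      have hz1 : z.1 = 0 := congrArg Prod.fst hz
      have hz2 : DG z = 0 := congrArg Prod.snd hz
      have hzz : z = ι₂ z.2 := by
        rw [hι₂def]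
        ext <;> simp [hz1]
      have hb := hess_bound (y := y) (D := D) hε lam₀ hpos' (xstar lam₀) z.2
      rw [hHx.fderiv] at hb
      have hDGz : (DG.comp ι₂) z.2 = 0 := by
        rw [ContinuousLinearMap.comp_apply, ← hzz]
        exact hz2
      rw [hDGz, inner_zero_right] at hb
      have hz2' : z.2 = 0 := by
        have : ‖z.2‖ = 0 := by nlinarith [norm_nonneg z.2, sq_nonneg ‖z.2‖]
        rwa [norm_eq_zero] at this
      have := hzz
      rw [hz2'] at this
      rw [this]
      simp
    have hinj : Function.Injective A.toLinearMap := by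
      intro z z' hzz
      have hsub : A (z - z') = 0 := by
        rw [map_sub, sub_eq_zero]
        exact hzz
      have h := hker (z - z') hsub
      rwa [sub_eq_zero] at h
    have hsurj : Function.Surjective A.toLinearMap :=
      LinearMap.injective_iff_surjective.mp hinj
    set e : (EuclideanSpace ℝ (Fin n) × EuclideanSpace ℝ (Fin n)) ≃L[ℝ]
        (EuclideanSpace ℝ (Fin n) × EuclideanSpace ℝ (Fin n)) :=
      (LinearEquiv.ofBijective A.toLinearMap ⟨hinj, hsurj⟩).toContinuousLinearEquiv with hedef
    have hecoe : (e : (EuclideanSpace ℝ (Fin n) × EuclideanSpace ℝ (Fin n)) →L[ℝ]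
        (EuclideanSpace ℝ (Fin n) × EuclideanSpace ℝ (Fin n))) = A :=
      ContinuousLinearMap.ext fun z => rfl
    have hAe : HasFDerivAt Φ (e : (EuclideanSpace ℝ (Fin n) × EuclideanSpace ℝ (Fin n)) →L[ℝ]
        (EuclideanSpace ℝ (Fin n) × EuclideanSpace ℝ (Fin n))) p₀ := by
      rw [hecoe]; exact hA
    have hΦat : ContDiffAt ℝ 1 Φ p₀ := hΦcd.contDiffAt
    set Ψ := hΦat.localInverse hAe one_ne_zero with hΨdef
    have hΨcd : ContDiffAt ℝ 1 Ψ (Φ p₀) := hΦat.to_localInverse hAe one_ne_zero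
    have hRI : ∀ᶠ q in nhds (Φ p₀), Φ (Ψ q) = q :=
      (hΦat.hasStrictFDerivAt' hAe one_ne_zero).eventually_right_inverse
    have hg0 : G p₀ = 0 := grad_eq_zero_of_min (hmin lam₀ hpos')
    have hΦp₀ : Φ p₀ = (lam₀, (0 : EuclideanSpace ℝ (Fin n))) := by
      rw [hΦdef]
      simp only
      rw [hg0]
    have hcont : Filter.Tendsto
        (fun lam : EuclideanSpace ℝ (Fin n) => (lam, (0 : EuclideanSpace ℝ (Fin n))))
        (nhds lam₀) (nhds (Φ p₀)) := by
      rw [hΦp₀]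
      exact (continuous_id.prodMk continuous_const).tendsto lam₀
    have hEv : ∀ᶠ lam in nhds lam₀, xstar lam = (Ψ (lam, 0)).2 := by
      filter_upwards [hcont.eventually hRI,
        hΩopen.mem_nhds (show lam₀ ∈ {lam : EuclideanSpace ℝ (Fin n) | ∀ i, 0 < lam i}
          from hpos)] with lam h1 h2
      have hl' : ∀ i, 0 ≤ lam i := fun i => (h2 i).le
      have hq1 : (Ψ (lam, 0)).1 = lam := congrArg Prod.fst h1
      have hq2 : G (Ψ (lam, 0)) = 0 := congrArg Prod.snd h1
      have hg : gradient (Feps ε y lam D) (Ψ (lam, 0)).2 = 0 := by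
        have heta : ((Ψ (lam, 0)).1, (Ψ (lam, 0)).2) = Ψ (lam, 0) := Prod.mk.eta
        rw [← heta, hq1] at hq2
        exact hq2
      have hx0 : gradient (Feps ε y lam D) (xstar lam) = 0 :=
        grad_eq_zero_of_min (hmin lam hl')
      exact grad_unique hε lam hl' hx0 hg
    have hΨat : ContDiffAt ℝ 1 Ψ (lam₀, (0 : EuclideanSpace ℝ (Fin n))) := hΦp₀ ▸ hΨcd
    have hpair : ContDiffAt ℝ 1
        (fun lam : EuclideanSpace ℝ (Fin n) => (lam, (0 : EuclideanSpace ℝ (Fin n)))) lam₀ :=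
      (contDiff_id.prodMk contDiff_const).contDiffAt
    have hcomp1 : ContDiffAt ℝ 1
        (fun lam : EuclideanSpace ℝ (Fin n) => Ψ (lam, 0)) lam₀ :=
      hΨat.comp lam₀ hpair
    have hcomp2 : ContDiffAt ℝ 1
        (fun lam : EuclideanSpace ℝ (Fin n) => (Ψ (lam, 0)).2) lam₀ :=
      contDiffAt_snd.comp lam₀ hcomp1
    exact hcomp2.congr_of_eventuallyEq hEv
  constructor
  · exact fun lam hlam => (hCD lam hlam).contDiffWithinAt
  · intro lam₀ hpos
    have hpos' : ∀ i, 0 ≤ lam₀ i := fun i => (hpos i).le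
    have hx : DifferentiableAt ℝ xstar lam₀ := (hCD lam₀ hpos).differentiableAt one_ne_zero
    set J := fderiv ℝ xstar lam₀ with hJdef
    set p₀ : EuclideanSpace ℝ (Fin n) × EuclideanSpace ℝ (Fin n) := (lam₀, xstar lam₀)
      with hp₀
    set DG := fderiv ℝ G p₀ with hDGdef
    have hDG : HasFDerivAt G DG p₀ := (hG.differentiable one_ne_zero p₀).hasFDerivAt
    set ι₂ : EuclideanSpace ℝ (Fin n) →L[ℝ]
        EuclideanSpace ℝ (Fin n) × EuclideanSpace ℝ (Fin n) :=
      (0 : EuclideanSpace ℝ (Fin n) →L[ℝ] EuclideanSpace ℝ (Fin n)).prod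
        (ContinuousLinearMap.id ℝ _) with hι₂def
    set ι₁ : EuclideanSpace ℝ (Fin n) →L[ℝ]
        EuclideanSpace ℝ (Fin n) × EuclideanSpace ℝ (Fin n) :=
      (ContinuousLinearMap.id ℝ _).prod
        (0 : EuclideanSpace ℝ (Fin n) →L[ℝ] EuclideanSpace ℝ (Fin n)) with hι₁def
    have hHx : HasFDerivAt (gradient (Feps ε y lam₀ D)) (DG.comp ι₂) (xstar lam₀) :=
      hDG.comp (xstar lam₀) ((hasFDerivAt_const lam₀ _).prodMk (hasFDerivAt_id _))
    have hRmap : HasFDerivAt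
        (fun m : EuclideanSpace ℝ (Fin n) => gradient (Feps ε y m D) (xstar lam₀))
        (DG.comp ι₁) lam₀ :=
      hDG.comp (f := fun m : EuclideanSpace ℝ (Fin n) => (m, xstar lam₀)) lam₀
        ((hasFDerivAt_id _).prodMk (hasFDerivAt_const (xstar lam₀) _))
    have hW : HasFDerivAt
        (fun lam : EuclideanSpace ℝ (Fin n) => G (lam, xstar lam))
        (DG.comp ((ContinuousLinearMap.id ℝ _).prod J)) lam₀ :=
      hDG.comp (f := fun lam : EuclideanSpace ℝ (Fin n) => (lam, xstar lam)) lam₀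
        ((hasFDerivAt_id _).prodMk hx.hasFDerivAt)
    have hW0 : (fun lam : EuclideanSpace ℝ (Fin n) => G (lam, xstar lam)) =ᶠ[nhds lam₀]
        fun _ => (0 : EuclideanSpace ℝ (Fin n)) := by
      filter_upwards [hΩopen.mem_nhds (show lam₀ ∈ {lam : EuclideanSpace ℝ (Fin n) |
        ∀ i, 0 < lam i} from hpos)] with lam hlam
      exact grad_eq_zero_of_min (hmin lam fun i => (hlam i).le)
    have hWconst : HasFDerivAt
        (fun lam : EuclideanSpace ℝ (Fin n) => G (lam, xstar lam))
        (0 : EuclideanSpace ℝ (Fin n) →L[ℝ] EuclideanSpace ℝ (Fin n)) lam₀ :=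
      (hasFDerivAt_const (0 : EuclideanSpace ℝ (Fin n)) lam₀).congr_of_eventuallyEq hW0
    have hDG0 : DG.comp ((ContinuousLinearMap.id ℝ _).prod J) = 0 := hW.unique hWconst
    rw [hHx.fderiv, hRmap.fderiv]
    apply ContinuousLinearMap.ext
    intro u
    have h1 : DG (u, J u) = 0 := by
      have := congrArg (fun (T : EuclideanSpace ℝ (Fin n) →L[ℝ]
        EuclideanSpace ℝ (Fin n)) => T u) hDG0
      simpa using this
    have h2 : DG (u, J u) = DG (u, 0) + DG (0, J u) := by
      rw [← map_add]
      congr 1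
      simp
    have h3 : DG (0, J u) = -(DG (u, 0)) := by
      rw [h2] at h1
      exact eq_neg_of_add_eq_zero_right h1
    simp only [ContinuousLinearMap.comp_apply, ContinuousLinearMap.neg_apply,
      ContinuousLinearMap.prod_apply, ContinuousLinearMap.zero_apply,
      ContinuousLinearMap.id_apply, ContinuousLinearMap.coe_comp', Function.comp_apply]
    exact h3
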